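/- Let V be a finite-dimensional real inner product space and φ an alternating p-form of comass one on V. There exists a mollifying Laplacian for φ (a symmetric positive-definite endomorphism A of V such that ⟨A,H⟩ ≥ 0 for every symmetric endomorphism H of V satisfying tr_ξ H ≥ 0 for all φ-planes ξ ∈ G(φ)) if and only if φ is elliptic, i.e. for every nonzero v ∈ V there is a φ-plane ξ ∈ G(φ) with P_ξ v ≠ 0. (Theorem 3.4, pointwise/parallel form) -/

import Mathlib

/-!
Since `tr_ξ H = tr (P_ξ ∘ H)`, only the subspaces spanned by the `φ`-planes matter, and the
theorem is a duality statement about a family of subspaces `K i` of `V`: a positive definite `A`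
with `tr (A ∘ H) ≥ 0` whenever all `tr (P_{K i} ∘ H) ≥ 0` exists iff the `K i` span `V`.
If some `v ≠ 0` is orthogonal to every `K i`, then `H = -v ⊗ v` has `tr (P_{K i} ∘ H) = 0` for
all `i` but `tr (A ∘ H) = -⟪v, A v⟫ < 0`. Conversely, if the `K i` span `V` then, by finite
dimensionality, finitely many of them do, and the sum of their orthogonal projections is such an
`A`.
-/

open scoped RealInnerProductSpace

noncomputable section

variable {V : Type*} [NormedAddCommGroup V] [InnerProductSpace ℝ V] [FiniteDimensional ℝ V]

/-- The orthogonal projection of `V` onto `span{e₁,…,e_p}`, as a linear endomorphism. -/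
def projL {p : ℕ} (e : Fin p → V) : V →ₗ[ℝ] V :=
  (Submodule.span ℝ (Set.range e)).subtype ∘ₗ
    (Submodule.orthogonalProjectionOnto (Submodule.span ℝ (Set.range e))).toLinearMap

open LinearMap InnerProductSpace Submodule

section

variable {ι : Type*}

lemma trace_comp_rankOne (T : V →ₗ[ℝ] V) (v w : V) :
    trace ℝ V (T ∘ₗ (rankOne ℝ v w : V →ₗ[ℝ] V)) = ⟪w, T v⟫ := by
  have : T ∘ₗ (rankOne ℝ v w : V →ₗ[ℝ] V) = rankOne ℝ (T v) w := by ext; simp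
  rw [this, trace_rankOne]

lemma trace_rankOne_comp (T : V →ₗ[ℝ] V) (v w : V) :
    trace ℝ V ((rankOne ℝ v w : V →ₗ[ℝ] V) ∘ₗ T) = ⟪w, T v⟫ := by
  rw [trace_comp_comm', trace_comp_rankOne]

lemma trace_sum_comp {R M : Type*} [CommRing R] [AddCommGroup M] [Module R M] (s : Finset ι)
    (f : ι → M →ₗ[R] M) (H : M →ₗ[R] M) :
    trace R M ((∑ i ∈ s, f i) ∘ₗ H) = ∑ i ∈ s, trace R M (f i ∘ₗ H) := by
  rw [← map_sum]
  congr 1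
  ext
  simp [LinearMap.sum_apply]

lemma inner_starProjection_eq_norm_sq (K : Submodule ℝ V) (v : V) :
    ⟪v, K.starProjection v⟫ = ‖K.starProjection v‖ ^ 2 := by
  rw [← real_inner_self_eq_norm_sq, inner_starProjection_left_eq_right,
    starProjection_eq_self_iff.mpr (K.starProjection_apply_mem v)]

lemma starProjection_span_eq_sum_rankOne [Fintype ι] {e : ι → V} (he : Orthonormal ℝ e) :
    (span ℝ (Set.range e)).starProjection = ∑ i, rankOne ℝ (e i) (e i) := by
  have hb : Orthonormal ℝ (Module.Basis.span he.linearIndependent) := by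
    convert orthonormal_span he using 1
    funext i
    exact Module.Basis.span_apply _ i
  simpa using
    ((Module.Basis.span he.linearIndependent).toOrthonormalBasis hb).starProjection_eq_sum_rankOne

lemma trace_starProjection_span_comp [Fintype ι] {e : ι → V} (he : Orthonormal ℝ e)
    (H : V →ₗ[ℝ] V) :
    trace ℝ V ((span ℝ (Set.range e)).starProjection ∘ₗ H) = ∑ i, ⟪e i, H (e i)⟫ := by
  simp only [starProjection_span_eq_sum_rankOne he, ContinuousLinearMap.toLinearMap_sum,
    trace_sum_comp, trace_rankOne_comp]

lemma iSup_eq_top_iff_forall_exists_starProjection_ne_zero (K : ι → Submodule ℝ V) :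
    ⨆ i, K i = ⊤ ↔ ∀ v : V, v ≠ 0 → ∃ i, (K i).starProjection v ≠ 0 := by
  simp only [← orthogonal_eq_bot_iff, ← iInf_orthogonal, eq_bot_iff, SetLike.le_def, mem_iInf,
    mem_bot, ne_eq, starProjection_apply_eq_zero_iff]
  exact forall_congr' fun v => not_imp_not.symm.trans (imp_congr_right fun _ => not_forall)

lemma exists_finset_iSup_eq_top {K : ι → Submodule ℝ V} (h : ⨆ i, K i = ⊤) :
    ∃ s : Finset ι, ⨆ i ∈ s, K i = ⊤ := by
  obtain ⟨s, hs⟩ := CompleteLattice.IsCompactElement.exists_finset_of_le_iSup _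
    ((fg_iff_compact ⊤).mp (Module.Finite.fg_top (R := ℝ) (M := V))) K h.ge
  exact ⟨s, top_le_iff.mp hs⟩

def IsMollifyingLaplacian (K : ι → Submodule ℝ V) (A : V →ₗ[ℝ] V) : Prop :=
  A.IsSymmetric ∧ (∀ v : V, v ≠ 0 → 0 < ⟪v, A v⟫) ∧
    ∀ H : V →ₗ[ℝ] V, H.IsSymmetric →
      (∀ i, 0 ≤ trace ℝ V ((K i).starProjection ∘ₗ H)) → 0 ≤ trace ℝ V (A ∘ₗ H)

lemma IsMollifyingLaplacian.iSup_eq_top {K : ι → Submodule ℝ V} {A : V →ₗ[ℝ] V}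
    (hA : IsMollifyingLaplacian K A) : ⨆ i, K i = ⊤ := by
  obtain ⟨-, hpos, hmol⟩ := hA
  rw [iSup_eq_top_iff_forall_exists_starProjection_ne_zero]
  intro v hv
  by_contra! hperp
  have hH : (-(rankOne ℝ v v : V →ₗ[ℝ] V)).IsSymmetric := by
    simpa using (isSymmetric_rankOne_self (𝕜 := ℝ) v).smul (c := -1) (by simp)
  have := hmol _ hH fun i => by simp [trace_comp_rankOne, hperp i]
  simp only [comp_neg, map_neg, trace_comp_rankOne, neg_nonneg] at this
  exact (hpos v hv).not_ge this

lemma isMollifyingLaplacian_sum_starProjection {K : ι → Submodule ℝ V} {s : Finset ι}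
    (hs : ⨆ i ∈ s, K i = ⊤) :
    IsMollifyingLaplacian K (∑ i ∈ s, ((K i).starProjection : V →ₗ[ℝ] V)) := by
  refine ⟨isSymmetric_sum s fun i _ => (K i).starProjection_isSymmetric, fun v hv => ?_,
    fun H _ hH => ?_⟩
  · obtain ⟨⟨j, hj⟩, hvj⟩ := (iSup_eq_top_iff_forall_exists_starProjection_ne_zero
      fun i : s => K i).mp (by rw [← hs, iSup_subtype']) v hv
    rw [← norm_ne_zero_iff] at hvj
    simp only [LinearMap.sum_apply, inner_sum, ContinuousLinearMap.coe_coe,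
      inner_starProjection_eq_norm_sq] at hvj ⊢
    exact Finset.sum_pos' (fun i _ => sq_nonneg _) ⟨j, hj, by positivity⟩
  · rw [trace_sum_comp]
    exact Finset.sum_nonneg fun i _ => hH i

theorem exists_isMollifyingLaplacian_iff (K : ι → Submodule ℝ V) :
    (∃ A, IsMollifyingLaplacian K A) ↔ ⨆ i, K i = ⊤ := by
  refine ⟨fun ⟨A, hA⟩ => hA.iSup_eq_top, fun h => ?_⟩
  obtain ⟨s, hs⟩ := exists_finset_iSup_eq_top h
  exact ⟨_, isMollifyingLaplacian_sum_starProjection hs⟩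

end

theorem exists_mollifying_laplacian_iff_elliptic_general {p : ℕ}
    (φ : V [⋀^Fin p]→ₗ[ℝ] ℝ) :
    (∃ A : V →ₗ[ℝ] V, A.IsSymmetric ∧ (∀ v : V, v ≠ 0 → 0 < ⟪v, A v⟫) ∧
      ∀ H : V →ₗ[ℝ] V, H.IsSymmetric →
        (∀ e : Fin p → V, Orthonormal ℝ e → φ e = 1 → 0 ≤ ∑ j, ⟪e j, H (e j)⟫) →
        0 ≤ LinearMap.trace ℝ V (A ∘ₗ H)) ↔
    (∀ v : V, v ≠ 0 → ∃ e : Fin p → V, Orthonormal ℝ e ∧ φ e = 1 ∧ projL e v ≠ 0) := by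
  let K (ξ : {e : Fin p → V // Orthonormal ℝ e ∧ φ e = 1}) := span ℝ (Set.range ξ.1)
  calc _ ↔ ∃ A, IsMollifyingLaplacian K A := by
        refine exists_congr fun A => and_congr_right' <| and_congr_right' <|
          forall₂_congr fun H _ => imp_congr_left ⟨fun h ξ => ?_, fun h e he h1 => ?_⟩
        · rw [trace_starProjection_span_comp ξ.2.1]
          exact h ξ ξ.2.1 ξ.2.2
        · simpa [K, trace_starProjection_span_comp he] using h ⟨e, he, h1⟩
    _ ↔ ⨆ ξ, K ξ = ⊤ := exists_isMollifyingLaplacian_iff K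
    _ ↔ _ := by
        rw [iSup_eq_top_iff_forall_exists_starProjection_ne_zero]
        -- `projL e` unfolds to `(span ℝ (Set.range e)).starProjection`
        exact forall₂_congr fun v _ => ⟨fun ⟨ξ, hξ⟩ => ⟨ξ.1, ξ.2.1, ξ.2.2, hξ⟩,
          fun ⟨e, he, h1, hv⟩ => ⟨⟨e, he, h1⟩, hv⟩⟩

/-- Theorem 3.4 (pointwise/parallel form): there exists a mollifying Laplacian for `φ`
(a symmetric positive-definite endomorphism `A` with `⟨A,H⟩ = tr(A∘H) ≥ 0` for every
symmetric `H` whose `ξ`-trace is nonnegative on all `φ`-planes `ξ`) if and only if `φ` is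
elliptic (for every `v ≠ 0` there is a `φ`-plane `ξ` with `P_ξ v ≠ 0`). -/
theorem exists_mollifying_laplacian_iff_elliptic {p : ℕ} (hp : 1 ≤ p)
    (φ : V [⋀^Fin p]→ₗ[ℝ] ℝ)
    (hcomass : ∀ e : Fin p → V, Orthonormal ℝ e → φ e ≤ 1) :
    (∃ A : V →ₗ[ℝ] V, A.IsSymmetric ∧ (∀ v : V, v ≠ 0 → 0 < ⟪v, A v⟫) ∧
      ∀ H : V →ₗ[ℝ] V, H.IsSymmetric →
        (∀ e : Fin p → V, Orthonormal ℝ e → φ e = 1 → 0 ≤ ∑ j, ⟪e j, H (e j)⟫) →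
        0 ≤ LinearMap.trace ℝ V (A ∘ₗ H)) ↔
    (∀ v : V, v ≠ 0 → ∃ e : Fin p → V, Orthonormal ℝ e ∧ φ e = 1 ∧ projL e v ≠ 0) :=
  exists_mollifying_laplacian_iff_elliptic_general φ
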